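/- Let j₁, j₂ ∈ L²(Ω;ℝ²) with ⟨j₁⟩ = (1,0)ᵀ and ⟨j₂⟩ = (0,1)ᵀ, let A = (a_{ij}) with a_{ij} = ⟨σ⁻¹ jᵢ·jⱼ⟩ and b = ⟨j₁·R⊥j₂⟩. Let L(x) := [[σ(x)⁻¹I₂, σ₁⁻¹R⊥],[−σ₁⁻¹R⊥, σ(x)⁻¹I₂]], g := f₁σ₁(σ₁−σ₂)/(σ₁+σ₂) + 2σ₁σ₂/(σ₁+σ₂), and M_∞ := (1/g)[[I₂,R⊥],[−R⊥,I₂]]. If there exists a nonzero K = (k₁,k₂,k₃,k₄) ∈ ℝ⁴ such that, with J_K := (k₁j₁+k₂j₂, k₃j₁+k₄j₂), one has L(x)J_K(x) = M_∞⟨J_K⟩ for almost every x ∈ Ω, then Tr A − 2b/σ₁ = g·(det A − b²/σ₁²); i.e., equality holds in the translation lower bound and the lower bound on the volume fraction is attained. -/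

import Mathlib

open MeasureTheory Matrix

noncomputable section

/-- The 90°-rotation matrix `R⊥` with rows `(0,1)` and `(-1,0)`. -/
def Rperp : Matrix (Fin 2) (Fin 2) ℝ := !![0, 1; -1, 0]

/-- Average of a scalar function over `Ω`. -/
def avg (Ω : Set (Fin 2 → ℝ)) (h : (Fin 2 → ℝ) → ℝ) : ℝ :=
  ((volume Ω).toReal)⁻¹ * ∫ x in Ω, h x

/-- The 4×4 block matrix `[[I₂, R⊥], [-R⊥, I₂]]`. -/
def blockIRperp : Matrix (Fin 4) (Fin 4) ℝ :=
  !![1, 0, 0, 1;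
     0, 1, -1, 0;
     0, -1, 1, 0;
     1, 0, 0, 1]

/-!
Write `J_K = 𝐉 K` with `𝐉 = diag(Hᵀ, Hᵀ)`, where `H` has rows `j₁, j₂`; the normalization of
`j₁, j₂` says `⟨𝐉⟩ = 1`, so `⟨J_K⟩ = K`. Multiplying the attainability condition by `𝐉ᵀ` and
averaging gives `⟨𝐉ᵀ L 𝐉⟩ K = M_∞ K`. Since `H R⊥ Hᵀ = (det H) R⊥` and `⟨det H⟩ = b`, the averaged
matrix is `[[A, (b/σ₁) R⊥], [-(b/σ₁) R⊥, A]]`. Hence the nonzero `K` lies in the kernel of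
`[[P, t R⊥], [-t R⊥, P]]` with `P = A - g⁻¹ I₂` and `t = b/σ₁ - g⁻¹`, whose determinant is
`(det P - t²)²` because `P` is symmetric; `det P = t²` expands to the claimed identity.
-/

/-- The block matrix `[[P, t R⊥], [-t R⊥, P]]`. -/
def blockRperp (P : Matrix (Fin 2) (Fin 2) ℝ) (t : ℝ) : Matrix (Fin 4) (Fin 4) ℝ :=
  !![P 0 0, P 0 1, 0, t;
     P 1 0, P 1 1, -t, 0;
     0, -t, P 0 0, P 0 1;
     t, 0, P 1 0, P 1 1]

/-- The block-diagonal matrix `[[H, 0], [0, H]]`. -/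
def diagBlock (H : Matrix (Fin 2) (Fin 2) ℝ) : Matrix (Fin 4) (Fin 4) ℝ :=
  !![H 0 0, H 0 1, 0, 0;
     H 1 0, H 1 1, 0, 0;
     0, 0, H 0 0, H 0 1;
     0, 0, H 1 0, H 1 1]

theorem blockRperp_smul_one (s c : ℝ) :
    blockRperp (s • 1) c = !![s, 0, 0, c; 0, s, -c, 0; 0, -c, s, 0; c, 0, 0, s] := by
  ext i j; fin_cases i <;> fin_cases j <;> simp [blockRperp]

theorem smul_blockIRperp (c : ℝ) : c • blockIRperp = blockRperp (c • 1) c := by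
  ext i j; fin_cases i <;> fin_cases j <;> simp [blockRperp, blockIRperp]

theorem blockRperp_sub (P Q : Matrix (Fin 2) (Fin 2) ℝ) (s t : ℝ) :
    blockRperp P s - blockRperp Q t = blockRperp (P - Q) (s - t) := by
  ext i j; fin_cases i <;> fin_cases j <;> simp [blockRperp] <;> ring

theorem diagBlock_one : diagBlock 1 = 1 := by
  ext i j; fin_cases i <;> fin_cases j <;> simp [diagBlock]

theorem det_blockRperp {P : Matrix (Fin 2) (Fin 2) ℝ} (hP : P 1 0 = P 0 1) (t : ℝ) :
    (blockRperp P t).det = (P.det - t ^ 2) ^ 2 := by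
  rw [det_succ_row_zero]
  simp [blockRperp, Fin.sum_univ_succ, det_fin_three, Fin.succAbove, det_fin_two, hP]
  ring

theorem det_eq_sq_of_blockRperp_mulVec_eq_zero {P : Matrix (Fin 2) (Fin 2) ℝ}
    (hP : P 1 0 = P 0 1) {t : ℝ} {K : Fin 4 → ℝ} (hK : K ≠ 0) (h : blockRperp P t *ᵥ K = 0) :
    P.det = t ^ 2 := by
  have hdet : (blockRperp P t).det = 0 := exists_mulVec_eq_zero_iff.mp ⟨K, hK, h⟩
  rw [det_blockRperp hP] at hdet
  exact sub_eq_zero.mp (pow_eq_zero_iff two_ne_zero |>.mp hdet)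

theorem diagBlock_mul_blockRperp_mul_diagBlock_transpose (H : Matrix (Fin 2) (Fin 2) ℝ)
    (s t : ℝ) :
    diagBlock H * blockRperp (s • 1) t * diagBlock Hᵀ = blockRperp (s • (H * Hᵀ)) (t * H.det) := by
  ext i j; fin_cases i <;> fin_cases j <;>
    simp [blockRperp, diagBlock, mul_apply, Fin.sum_univ_four, Fin.sum_univ_two, det_fin_two] <;>
    ring

theorem trace_sub_eq_mul_det_sub {A : Matrix (Fin 2) (Fin 2) ℝ} {β g : ℝ} (hg : g ≠ 0)
    (h : (A - g⁻¹ • 1).det = (β - g⁻¹) ^ 2) : A.trace - 2 * β = g * (A.det - β ^ 2) := by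
  rw [det_fin_two] at h
  simp only [Matrix.sub_apply, Matrix.smul_apply, one_apply_eq, one_apply_ne zero_ne_one,
    one_apply_ne one_ne_zero, smul_eq_mul, mul_one, mul_zero, sub_zero] at h
  rw [trace_fin_two, det_fin_two]
  linear_combination (-g) * h - (A 0 0 + A 1 1 - 2 * β) * mul_inv_cancel₀ hg

theorem norm_inv_two_phase_le {σ₁ σ₂ χ : ℝ} (hσ₂ : 0 < σ₂) (hσ : σ₂ < σ₁) (hχ : χ = 0 ∨ χ = 1) :
    ‖(σ₁ * χ + σ₂ * (1 - χ))⁻¹‖ ≤ σ₂⁻¹ := by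
  rcases hχ with rfl | rfl
  · simp [abs_of_pos hσ₂]
  · simpa [abs_of_pos (hσ₂.trans hσ)] using (inv_le_inv₀ (hσ₂.trans hσ) hσ₂).mpr hσ.le

theorem two_phase_const_pos {f σ₁ σ₂ : ℝ} (hf : 0 ≤ f) (hσ₂ : 0 < σ₂) (hσ : σ₂ < σ₁) :
    0 < f * σ₁ * (σ₁ - σ₂) / (σ₁ + σ₂) + 2 * σ₁ * σ₂ / (σ₁ + σ₂) := by
  have : 0 < σ₁ := hσ₂.trans hσ
  have : 0 < σ₁ - σ₂ := sub_pos.2 hσ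
  positivity

theorem of_mul_transpose_of (u v : Fin 2 → ℝ) :
    of ![u, v] * (of ![u, v])ᵀ = !![u ⬝ᵥ u, u ⬝ᵥ v; v ⬝ᵥ u, v ⬝ᵥ v] := by
  ext i k; fin_cases i <;> fin_cases k <;> rfl

theorem det_of_eq_dotProduct_Rperp_mulVec (u v : Fin 2 → ℝ) :
    (of ![u, v]).det = u ⬝ᵥ Rperp *ᵥ v := by
  simp [det_fin_two, Rperp, dotProduct, mulVec, Fin.sum_univ_two]
  ring

section Integrable

variable {α : Type*} [MeasurableSpace α] {μ : Measure α}

theorem integrable_blockRperp_apply {P : α → Matrix (Fin 2) (Fin 2) ℝ} {t : α → ℝ}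
    (hP : ∀ i j, Integrable (fun x => P x i j) μ) (ht : Integrable t μ) (i j : Fin 4) :
    Integrable (fun x => blockRperp (P x) (t x) i j) μ := by
  fin_cases i <;> fin_cases j <;> simp [blockRperp, hP, ht]

theorem integrable_diagBlock_apply {H : α → Matrix (Fin 2) (Fin 2) ℝ}
    (hH : ∀ i j, Integrable (fun x => H x i j) μ) (i j : Fin 4) :
    Integrable (fun x => diagBlock (H x) i j) μ := by
  fin_cases i <;> fin_cases j <;> simp [diagBlock, hH]

end Integrable

def avgMat {m n : Type*} (Ω : Set (Fin 2 → ℝ)) (M : (Fin 2 → ℝ) → Matrix m n ℝ) : Matrix m n ℝ :=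
  Matrix.of fun i j => avg Ω fun x => M x i j

section Average

variable {Ω : Set (Fin 2 → ℝ)}

theorem avg_congr_ae {f h : (Fin 2 → ℝ) → ℝ} (hfh : f =ᵐ[volume.restrict Ω] h) :
    avg Ω f = avg Ω h := by
  rw [avg, avg, integral_congr_ae hfh]

theorem avg_nonneg {f : (Fin 2 → ℝ) → ℝ} (hf : ∀ x, 0 ≤ f x) : 0 ≤ avg Ω f :=
  mul_nonneg (inv_nonneg.mpr ENNReal.toReal_nonneg) (integral_nonneg hf)

theorem avg_neg (f : (Fin 2 → ℝ) → ℝ) : avg Ω (fun x => -f x) = -avg Ω f := by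
  rw [avg, avg, integral_neg, mul_neg]

theorem avg_const_mul (c : ℝ) (f : (Fin 2 → ℝ) → ℝ) : avg Ω (fun x => c * f x) = c * avg Ω f := by
  rw [avg, avg, integral_const_mul, mul_left_comm]

theorem avg_sum_mul_const {ι : Type*} (s : Finset ι) {f : ι → (Fin 2 → ℝ) → ℝ}
    (hf : ∀ i ∈ s, Integrable (f i) (volume.restrict Ω)) (c : ι → ℝ) :
    avg Ω (fun x => ∑ i ∈ s, f i x * c i) = ∑ i ∈ s, avg Ω (f i) * c i := by
  simp only [avg, integral_finsetSum s fun i hi => (hf i hi).mul_const (c i), integral_mul_const,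
    Finset.mul_sum, mul_assoc]

theorem avg_mulVec {m n : Type*} [Fintype n] {M : (Fin 2 → ℝ) → Matrix m n ℝ}
    (hM : ∀ i j, Integrable (fun x => M x i j) (volume.restrict Ω)) (v : n → ℝ) :
    (fun i => avg Ω fun x => (M x *ᵥ v) i) = avgMat Ω M *ᵥ v := by
  funext i
  exact avg_sum_mul_const _ (fun j _ => hM i j) v

theorem avgMat_mulVec_eq_of_ae {m n p : Type*} [Fintype n] [Fintype p]
    {M : (Fin 2 → ℝ) → Matrix m n ℝ} {N : (Fin 2 → ℝ) → Matrix m p ℝ}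
    (hM : ∀ i j, Integrable (fun x => M x i j) (volume.restrict Ω))
    (hN : ∀ i j, Integrable (fun x => N x i j) (volume.restrict Ω)) {v : n → ℝ} {w : p → ℝ}
    (h : ∀ᵐ x ∂(volume.restrict Ω), M x *ᵥ v = N x *ᵥ w) :
    avgMat Ω M *ᵥ v = avgMat Ω N *ᵥ w := by
  rw [← avg_mulVec hM, ← avg_mulVec hN]
  funext i
  exact avg_congr_ae (h.mono fun x hx => congrFun hx i)

theorem avgMat_blockRperp (P : (Fin 2 → ℝ) → Matrix (Fin 2) (Fin 2) ℝ) (t : (Fin 2 → ℝ) → ℝ) :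
    avgMat Ω (fun x => blockRperp (P x) (t x)) = blockRperp (avgMat Ω P) (avg Ω t) := by
  ext i j; fin_cases i <;> fin_cases j <;> simp [avgMat, blockRperp, avg_neg] <;> simp [avg]

theorem avgMat_transpose {m n : Type*} (M : (Fin 2 → ℝ) → Matrix m n ℝ) :
    avgMat Ω (fun x => (M x)ᵀ) = (avgMat Ω M)ᵀ :=
  rfl

theorem avgMat_diagBlock (H : (Fin 2 → ℝ) → Matrix (Fin 2) (Fin 2) ℝ) :
    avgMat Ω (fun x => diagBlock (H x)) = diagBlock (avgMat Ω H) := by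
  ext i j; fin_cases i <;> fin_cases j <;> simp [avgMat, diagBlock, avg]

theorem avg_diagBlock_transpose_mulVec {H : (Fin 2 → ℝ) → Matrix (Fin 2) (Fin 2) ℝ}
    (hH : ∀ i k, Integrable (fun x => H x i k) (volume.restrict Ω)) (hHavg : avgMat Ω H = 1)
    (K : Fin 4 → ℝ) : (fun i => avg Ω fun x => (diagBlock (H x)ᵀ *ᵥ K) i) = K := by
  rw [avg_mulVec (M := fun x => diagBlock (H x)ᵀ) (integrable_diagBlock_apply fun i k => hH k i),
    avgMat_diagBlock, avgMat_transpose, hHavg, transpose_one, diagBlock_one, one_mulVec]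

end Average

theorem blockRperp_avg_gram_mulVec_eq_of_ae {Ω : Set (Fin 2 → ℝ)}
    [IsFiniteMeasure (volume.restrict Ω)]
    {s : (Fin 2 → ℝ) → ℝ} {C : ℝ} (hs : AEStronglyMeasurable s (volume.restrict Ω))
    (hsC : ∀ x, ‖s x‖ ≤ C) {H : (Fin 2 → ℝ) → Matrix (Fin 2) (Fin 2) ℝ}
    (hH : ∀ i k, MemLp (fun x => H x i k) 2 (volume.restrict Ω)) (hHavg : avgMat Ω H = 1)
    {c : ℝ} {M : Matrix (Fin 4) (Fin 4) ℝ} {K : Fin 4 → ℝ}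
    (h : ∀ᵐ x ∂(volume.restrict Ω), blockRperp (s x • 1) c *ᵥ (diagBlock (H x)ᵀ *ᵥ K) = M *ᵥ K) :
    blockRperp (avgMat Ω fun x => s x • (H x * (H x)ᵀ)) (c * avg Ω fun x => (H x).det) *ᵥ K =
      M *ᵥ K := by
  have hT : ∀ᵐ x ∂(volume.restrict Ω), blockRperp (s x • (H x * (H x)ᵀ)) (c * (H x).det) *ᵥ K =
      diagBlock (H x) *ᵥ (M *ᵥ K) := h.mono fun x hx => by
    rw [← diagBlock_mul_blockRperp_mul_diagBlock_transpose, ← mulVec_mulVec, ← mulVec_mulVec, hx]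
  have hgram : ∀ i k, Integrable (fun x => (s x • (H x * (H x)ᵀ)) i k) (volume.restrict Ω) := by
    intro i k
    simp only [Matrix.smul_apply, mul_apply, transpose_apply, smul_eq_mul]
    exact (integrable_finsetSum _ fun l _ => (hH i l).integrable_mul (hH k l)).bdd_mul hs
      (ae_of_all _ hsC)
  have hdet : Integrable (fun x => (H x).det) (volume.restrict Ω) := by
    simp only [det_fin_two]
    exact ((hH 0 0).integrable_mul (hH 1 1)).sub ((hH 0 1).integrable_mul (hH 1 0))
  have havg := avgMat_mulVec_eq_of_ae (integrable_blockRperp_apply hgram (hdet.const_mul c))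
    (integrable_diagBlock_apply fun i k => (hH i k).integrable one_le_two) hT
  rwa [avgMat_blockRperp, avg_const_mul, avgMat_diagBlock, hHavg, diagBlock_one, one_mulVec]
    at havg

theorem lower_bound_attained_of_attainability_condition_general
    (Ω : Set (Fin 2 → ℝ))
    (hΩpos : 0 < (volume Ω).toReal)
    (χ₁ : (Fin 2 → ℝ) → ℝ) (hχmeas : Measurable χ₁)
    (hχ01 : ∀ x, χ₁ x = 0 ∨ χ₁ x = 1)
    (σ₁ σ₂ : ℝ) (hσ₂ : 0 < σ₂) (hσ : σ₂ < σ₁)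
    (σ : (Fin 2 → ℝ) → ℝ)
    (hσdef : ∀ x, σ x = σ₁ * χ₁ x + σ₂ * (1 - χ₁ x))
    (f₁ : ℝ) (hf₁ : f₁ = avg Ω χ₁)
    (j₁ j₂ : (Fin 2 → ℝ) → (Fin 2 → ℝ))
    (hj₁ : MemLp j₁ 2 (volume.restrict Ω))
    (hj₂ : MemLp j₂ 2 (volume.restrict Ω))
    -- normalization `⟨j₁⟩ = (1,0)ᵀ`, `⟨j₂⟩ = (0,1)ᵀ`
    (hj₁avg : avg Ω (fun x => j₁ x 0) = 1 ∧ avg Ω (fun x => j₁ x 1) = 0)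
    (hj₂avg : avg Ω (fun x => j₂ x 0) = 0 ∧ avg Ω (fun x => j₂ x 1) = 1)
    (A : Matrix (Fin 2) (Fin 2) ℝ)
    (hA11 : A 0 0 = avg Ω (fun x => (σ x)⁻¹ * (j₁ x ⬝ᵥ j₁ x)))
    (hA12 : A 0 1 = avg Ω (fun x => (σ x)⁻¹ * (j₁ x ⬝ᵥ j₂ x)))
    (hA21 : A 1 0 = avg Ω (fun x => (σ x)⁻¹ * (j₂ x ⬝ᵥ j₁ x)))
    (hA22 : A 1 1 = avg Ω (fun x => (σ x)⁻¹ * (j₂ x ⬝ᵥ j₂ x)))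
    (b : ℝ) (hb : b = avg Ω (fun x => j₁ x ⬝ᵥ Rperp.mulVec (j₂ x)))
    -- `L x` is the translated tensor at `c = 1/σ₁`
    (L : (Fin 2 → ℝ) → Matrix (Fin 4) (Fin 4) ℝ)
    (hL : ∀ x, L x = !![(σ x)⁻¹, 0, 0, σ₁⁻¹;
                        0, (σ x)⁻¹, -σ₁⁻¹, 0;
                        0, -σ₁⁻¹, (σ x)⁻¹, 0;
                        σ₁⁻¹, 0, 0, (σ x)⁻¹])
    (g : ℝ) (hg : g = f₁ * σ₁ * (σ₁ - σ₂) / (σ₁ + σ₂) + 2 * σ₁ * σ₂ / (σ₁ + σ₂))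
    (Minf : Matrix (Fin 4) (Fin 4) ℝ) (hMinf : Minf = g⁻¹ • blockIRperp)
    -- `J_K = (k₁j₁ + k₂j₂, k₃j₁ + k₄j₂)`
    (JK : (Fin 4 → ℝ) → (Fin 2 → ℝ) → (Fin 4 → ℝ))
    (hJK : ∀ K x, JK K x = ![K 0 * j₁ x 0 + K 1 * j₂ x 0,
                             K 0 * j₁ x 1 + K 1 * j₂ x 1,
                             K 2 * j₁ x 0 + K 3 * j₂ x 0,
                             K 2 * j₁ x 1 + K 3 * j₂ x 1])
    -- for some nonzero `K`, the attainability condition holds a.e.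
    (hatt : ∃ K : Fin 4 → ℝ, K ≠ 0 ∧
      (∀ᵐ x ∂(volume.restrict Ω),
          (L x).mulVec (JK K x) =
            Minf.mulVec (fun i => avg Ω (fun y => JK K y i)))) :
    A.trace - 2 * b / σ₁ = g * (A.det - b ^ 2 / σ₁ ^ 2) := by
  obtain ⟨K, hK, hae⟩ := hatt
  have : IsFiniteMeasure (volume.restrict Ω) :=
    isFiniteMeasure_restrict.mpr (ENNReal.toReal_pos_iff.mp hΩpos).2.ne
  set H : (Fin 2 → ℝ) → Matrix (Fin 2) (Fin 2) ℝ := fun x => of ![j₁ x, j₂ x]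
  have hH : ∀ i k, MemLp (fun x => H x i k) 2 (volume.restrict Ω) := by
    intro i k; fin_cases i; exacts [hj₁.eval k, hj₂.eval k]
  have hHavg : avgMat Ω H = 1 := by
    ext i k; fin_cases i <;> fin_cases k <;> simp [avgMat, H, hj₁avg, hj₂avg]
  have hJK_mulVec : ∀ x, JK K x = diagBlock (H x)ᵀ *ᵥ K := fun x => by
    rw [hJK]; ext i
    fin_cases i <;> simp [H, diagBlock, mulVec, dotProduct, Fin.sum_univ_four] <;> ring
  simp only [hJK_mulVec, hL, ← blockRperp_smul_one,
    avg_diagBlock_transpose_mulVec (fun i k => (hH i k).integrable one_le_two) hHavg] at hae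
  have hσinv_meas : Measurable fun x => (σ x)⁻¹ := by simp_rw [hσdef]; fun_prop
  have hker := blockRperp_avg_gram_mulVec_eq_of_ae hσinv_meas.aestronglyMeasurable
    (fun x => hσdef x ▸ norm_inv_two_phase_le hσ₂ hσ (hχ01 x)) hH hHavg hae
  have hgram : avgMat Ω (fun x => (σ x)⁻¹ • (H x * (H x)ᵀ)) = A := by
    simp only [H, of_mul_transpose_of]
    ext i k; fin_cases i <;> fin_cases k <;> simp [avgMat, hA11, hA12, hA21, hA22]
  have hdet : avg Ω (fun x => (H x).det) = b := by
    simp only [H, det_of_eq_dotProduct_Rperp_mulVec, hb]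
  rw [hgram, hdet, hMinf, smul_blockIRperp, ← sub_eq_zero, ← sub_mulVec, blockRperp_sub] at hker
  have hsymm : (A - g⁻¹ • 1) 1 0 = (A - g⁻¹ • 1) 0 1 := by simp [hA12, hA21, dotProduct_comm]
  have hf₁0 : 0 ≤ f₁ := hf₁ ▸ avg_nonneg fun x => by rcases hχ01 x with h | h <;> simp [h]
  have hg0 : 0 < g := hg ▸ two_phase_const_pos hf₁0 hσ₂ hσ
  linear_combination
    trace_sub_eq_mul_det_sub hg0.ne' (det_eq_sq_of_blockRperp_mulVec_eq_zero hsymm hK hker)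

/-- If for some nonzero vector `K` the attainability condition `L J_K = M_∞⟨J_K⟩` holds
a.e., then equality holds in the translation lower bound and the lower bound on the volume
fraction is attained; see (3.1)–(3.8) of the paper. -/
theorem lower_bound_attained_of_attainability_condition
    (Ω : Set (Fin 2 → ℝ)) (hΩmeas : MeasurableSet Ω)
    (hΩbdd : Bornology.IsBounded Ω) (hΩpos : 0 < (volume Ω).toReal)
    (χ₁ : (Fin 2 → ℝ) → ℝ) (hχmeas : Measurable χ₁)
    (hχ01 : ∀ x, χ₁ x = 0 ∨ χ₁ x = 1)
    (σ₁ σ₂ : ℝ) (hσ₂ : 0 < σ₂) (hσ : σ₂ < σ₁)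
    (σ : (Fin 2 → ℝ) → ℝ)
    (hσdef : ∀ x, σ x = σ₁ * χ₁ x + σ₂ * (1 - χ₁ x))
    (f₁ : ℝ) (hf₁ : f₁ = avg Ω χ₁)
    (j₁ j₂ : (Fin 2 → ℝ) → (Fin 2 → ℝ))
    (hj₁ : MemLp j₁ 2 (volume.restrict Ω))
    (hj₂ : MemLp j₂ 2 (volume.restrict Ω))
    -- normalization `⟨j₁⟩ = (1,0)ᵀ`, `⟨j₂⟩ = (0,1)ᵀ`
    (hj₁avg : avg Ω (fun x => j₁ x 0) = 1 ∧ avg Ω (fun x => j₁ x 1) = 0)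
    (hj₂avg : avg Ω (fun x => j₂ x 0) = 0 ∧ avg Ω (fun x => j₂ x 1) = 1)
    (A : Matrix (Fin 2) (Fin 2) ℝ)
    (hA11 : A 0 0 = avg Ω (fun x => (σ x)⁻¹ * (j₁ x ⬝ᵥ j₁ x)))
    (hA12 : A 0 1 = avg Ω (fun x => (σ x)⁻¹ * (j₁ x ⬝ᵥ j₂ x)))
    (hA21 : A 1 0 = avg Ω (fun x => (σ x)⁻¹ * (j₂ x ⬝ᵥ j₁ x)))
    (hA22 : A 1 1 = avg Ω (fun x => (σ x)⁻¹ * (j₂ x ⬝ᵥ j₂ x)))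
    (b : ℝ) (hb : b = avg Ω (fun x => j₁ x ⬝ᵥ Rperp.mulVec (j₂ x)))
    -- `L x` is the translated tensor at `c = 1/σ₁`
    (L : (Fin 2 → ℝ) → Matrix (Fin 4) (Fin 4) ℝ)
    (hL : ∀ x, L x = !![(σ x)⁻¹, 0, 0, σ₁⁻¹;
                        0, (σ x)⁻¹, -σ₁⁻¹, 0;
                        0, -σ₁⁻¹, (σ x)⁻¹, 0;
                        σ₁⁻¹, 0, 0, (σ x)⁻¹])
    (g : ℝ) (hg : g = f₁ * σ₁ * (σ₁ - σ₂) / (σ₁ + σ₂) + 2 * σ₁ * σ₂ / (σ₁ + σ₂))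
    (Minf : Matrix (Fin 4) (Fin 4) ℝ) (hMinf : Minf = g⁻¹ • blockIRperp)
    -- `J_K = (k₁j₁ + k₂j₂, k₃j₁ + k₄j₂)`
    (JK : (Fin 4 → ℝ) → (Fin 2 → ℝ) → (Fin 4 → ℝ))
    (hJK : ∀ K x, JK K x = ![K 0 * j₁ x 0 + K 1 * j₂ x 0,
                             K 0 * j₁ x 1 + K 1 * j₂ x 1,
                             K 2 * j₁ x 0 + K 3 * j₂ x 0,
                             K 2 * j₁ x 1 + K 3 * j₂ x 1])
    -- for some nonzero `K`, the attainability condition holds a.e.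
    (hatt : ∃ K : Fin 4 → ℝ, K ≠ 0 ∧
      (∀ᵐ x ∂(volume.restrict Ω),
          (L x).mulVec (JK K x) =
            Minf.mulVec (fun i => avg Ω (fun y => JK K y i)))) :
    A.trace - 2 * b / σ₁ = g * (A.det - b ^ 2 / σ₁ ^ 2) :=
  lower_bound_attained_of_attainability_condition_general Ω hΩpos χ₁ hχmeas hχ01 σ₁ σ₂ hσ₂ hσ σ
    hσdef f₁ hf₁ j₁ j₂ hj₁ hj₂ hj₁avg hj₂avg A hA11 hA12 hA21 hA22 b hb L hL g hg Minf hMinf JK hJK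
    hatt
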